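/- If n ≡ 1 (mod 6) or n ≡ 5 (mod 6), then the cycle C_n admits no J-colouring: for every proper colouring of C_n, some vertex's closed neighbourhood fails to contain all colours used. -/

import Mathlib

open SimpleGraph

/-- A colouring is proper. -/
def ProperColoring {V : Type*} {k : ℕ} (G : SimpleGraph V) (c : V → Fin k) : Prop :=
  ∀ u v, G.Adj u v → c u ≠ c v

/-- Vertex `v` belongs to a rainbow neighbourhood: its closed neighbourhood
contains every colour. -/
def RainbowAt {V : Type*} {k : ℕ} (G : SimpleGraph V) (c : V → Fin k) (v : V) : Prop :=
  ∀ i : Fin k, ∃ u, (u = v ∨ G.Adj v u) ∧ c u = i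

/-- A J-colouring: a proper colouring in which every vertex belongs to a
rainbow neighbourhood. -/
def IsJColoring {V : Type*} {k : ℕ} (G : SimpleGraph V) (c : V → Fin k) : Prop :=
  ProperColoring G c ∧ ∀ v, RainbowAt G c v

/-!
In a J-colouring `c` of `C_n` every colour used occurs in each window `{v - 1, v, v + 1}`.
If `c (v + 2) = c v` for some `v`, the window at `v + 1` shows that only two colours are used,
which is impossible on an odd cycle. Hence `c (v + 2) ≠ c v` everywhere, and then the window at
`v + 2` forces `c (v + 3) = c v`. A `3`-periodic colouring of `C_n` with `3 ∤ n` is constant,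
contradicting properness.
-/

open Function Fin.NatCast Fin.CommRing

namespace Fin

variable {α : Type*} {n : ℕ} [NeZero n] {f : Fin n → α}

theorem periodic_one_of_periodic_coprime {a : ℕ} (hf : Periodic f (a : Fin n))
    (ha : a.Coprime n) : Periodic f 1 := by
  rcases Nat.lt_or_ge 1 n with hn | hn
  · obtain ⟨j, -, hj⟩ := Nat.exists_mul_mod_eq_one_of_coprime ha hn
    have hj1 : j • (a : Fin n) = 1 := by
      ext
      rw [nsmul_eq_mul, ← Nat.cast_mul, val_natCast, mul_comm, hj, val_one',
        Nat.mod_eq_of_lt hn]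
    exact hj1 ▸ hf.nsmul j
  · obtain rfl : n = 1 := by have := NeZero.ne n; omega
    intro x
    rw [Subsingleton.elim (x + 1) x]

theorem not_periodic_of_apply_add_one_ne (hf : ∀ v, f (v + 1) ≠ f v) {a : ℕ}
    (ha : a.Coprime n) : ¬Periodic f (a : Fin n) :=
  fun hper ↦ hf 0 (periodic_one_of_periodic_coprime hper ha 0)

theorem even_of_apply_add_one_ne_of_two_values (hf : ∀ v, f (v + 1) ≠ f v) {a b : α}
    (hab : ∀ v, f v = a ∨ f v = b) : Even n := by
  have hper : Periodic f (2 : ℕ) := fun v ↦ by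
    have h1 := hf v
    have h2 := hf (v + 1)
    rw [add_assoc, one_add_one_eq_two] at h2
    rcases hab v with h | h <;> rcases hab (v + 1) with h' | h' <;>
      rcases hab (v + 2) with h'' | h'' <;> simp_all
  by_contra hodd
  exact not_periodic_of_apply_add_one_ne hf
    (Nat.coprime_two_left.mpr (Nat.not_even_iff_odd.mp hodd)) hper

theorem not_coprime_six_of_range_subset_image_window (hf : ∀ v, f (v + 1) ≠ f v)
    (hwin : ∀ v, Set.range f ⊆ f '' {v - 1, v, v + 1}) : ¬Nat.Coprime 6 n := by
  intro h6
  have h2 : Nat.Coprime 2 n := Nat.Coprime.coprime_dvd_left (by norm_num) h6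
  have h3 : Nat.Coprime 3 n := Nat.Coprime.coprime_dvd_left (by norm_num) h6
  have hnear : ∀ v u, f u = f (v - 1) ∨ f u = f v ∨ f u = f (v + 1) := fun v u ↦ by
    obtain ⟨w, hw, hfw⟩ := hwin v ⟨u, rfl⟩
    rcases hw with rfl | rfl | rfl <;> simp [hfw]
  have hskip : ∀ v, f (v + 2) ≠ f v := fun v hv ↦ by
    refine Nat.not_even_iff_odd.mpr (Nat.coprime_two_left.mp h2)
      (even_of_apply_add_one_ne_of_two_values hf (a := f v) (b := f (v + 1)) fun u ↦ ?_)
    have := hnear (v + 1) u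
    rw [add_sub_cancel_right, add_assoc, one_add_one_eq_two, hv] at this
    tauto
  have hper : Periodic f (3 : ℕ) := fun v ↦ by
    rcases hnear (v + 2) v with h | h | h
    · rw [show v + 2 - 1 = v + 1 by ring] at h
      exact absurd h.symm (hf v)
    · exact absurd h.symm (hskip v)
    · rw [show v + 2 + 1 = v + 3 by ring] at h
      exact h.symm
  exact not_periodic_of_apply_add_one_ne hf h3 hper

end Fin

theorem cycleGraph_adj_add_one {n : ℕ} (v : Fin (n + 2)) : (cycleGraph (n + 2)).Adj v (v + 1) :=
  cycleGraph_adj.mpr (Or.inr (add_sub_cancel_left v 1))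

theorem cycleGraph_adj_iff {n : ℕ} {v w : Fin (n + 2)} :
    (cycleGraph (n + 2)).Adj v w ↔ w = v - 1 ∨ w = v + 1 := by
  rw [← mem_neighborSet, cycleGraph_neighborSet, Set.mem_insert_iff, Set.mem_singleton_iff]

theorem cycle_not_JColorable (n : ℕ) (hn : 3 ≤ n) (h : n % 6 = 1 ∨ n % 6 = 5) :
    ∀ (k : ℕ) (c : Fin n → Fin k), ProperColoring (cycleGraph n) c →
      ∃ v : Fin n, ∃ i : Fin k, (∃ u, c u = i) ∧
        ∀ u, (u = v ∨ (cycleGraph n).Adj v u) → c u ≠ i := by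
  intro k c hc
  have h6 : Nat.Coprime 6 n := by
    rw [Nat.Coprime, Nat.gcd_rec]
    rcases h with h | h <;> rw [h] <;> rfl
  obtain ⟨m, rfl⟩ : ∃ m, n = m + 2 := ⟨n - 2, by omega⟩
  by_contra! hJ
  refine Fin.not_coprime_six_of_range_subset_image_window
    (fun v ↦ (hc _ _ (cycleGraph_adj_add_one v)).symm) (fun v _ hu ↦ ?_) h6
  obtain ⟨w, hw, hcw⟩ := hJ v _ hu
  refine ⟨w, ?_, hcw⟩
  rw [cycleGraph_adj_iff] at hw
  simp only [Set.mem_insert_iff, Set.mem_singleton_iff]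
  tauto
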